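/- Let e_0, e_∞ ∈ ℂ∖{0}, ẽ_1 ∈ ℂ∖{0}, and set a_0 = e_0 + e_0^{-1}, a_∞ = e_∞ + e_∞^{-1}. (1) If ẽ_1e_0e_∞ = −1, then the point (X_0, W_t, U_1) = (−ẽ_1 − ẽ_1^{-1}, e_∞^{-1}, e_0^{-1}) is a singular point of the surface {F̃(·;ã) = 0}: at this point F̃ = 0 and F̃_{X_0} = F̃_{W_t} = F̃_{U_1} = 0. (2) If ẽ_1 = −e_0e_∞, then the point (X_0, W_t, U_1) = (−ẽ_1 − ẽ_1^{-1}, e_∞, e_0) is likewise a singular point of {F̃(·;ã) = 0}. -/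

import Mathlib

/-!
Under `ẽ₁ = -e₀e_∞` the point `(-ẽ₁ - ẽ₁⁻¹, e_∞, e₀)` is singular by direct computation.
Replacing `e₀, e_∞` by their inverses leaves `a₀, a_∞` unchanged and turns the resonance
`ẽ₁e₀e_∞ = -1` into `ẽ₁ = -e₀⁻¹e_∞⁻¹`, so case (1) is case (2) for the inverted parameters.
-/

noncomputable section

/-- The Painlevé V Fricke polynomial `F̃(X0, Wt, U1; a0, ẽ1, a∞)`. -/
def FV (a0 te1 aI X0 WT U1 : ℂ) : ℂ :=
  X0 * WT * U1 + WT ^ 2 + U1 ^ 2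
    - (-te1) * X0 - (aI - te1 * a0) * WT - (a0 - te1 * aI) * U1
    + (1 - te1 * a0 * aI + te1 ^ 2)

/-- `F̃_{X_0} = U1 Wt − θ̃_0`. -/
def FVX0 (a0 te1 aI X0 WT U1 : ℂ) : ℂ := U1 * WT - (-te1)

/-- `F̃_{W_t} = X0 U1 + 2 Wt − θ̃_t`. -/
def FVWT (a0 te1 aI X0 WT U1 : ℂ) : ℂ := X0 * U1 + 2 * WT - (aI - te1 * a0)

/-- `F̃_{U_1} = X0 Wt + 2 U1 − θ̃_1`. -/
def FVU1 (a0 te1 aI X0 WT U1 : ℂ) : ℂ := X0 * WT + 2 * U1 - (a0 - te1 * aI)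

def IsSingularPointFV (a0 te1 aI X0 WT U1 : ℂ) : Prop :=
  FV a0 te1 aI X0 WT U1 = 0 ∧ FVX0 a0 te1 aI X0 WT U1 = 0 ∧
    FVWT a0 te1 aI X0 WT U1 = 0 ∧ FVU1 a0 te1 aI X0 WT U1 = 0

theorem isSingularPointFV_of_eq_neg_mul {e0 eI te1 : ℂ} (he0 : e0 ≠ 0) (heI : eI ≠ 0)
    (h : te1 = -(e0 * eI)) :
    IsSingularPointFV (e0 + e0⁻¹) te1 (eI + eI⁻¹) (-te1 - te1⁻¹) eI e0 := by
  subst h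
  refine ⟨?_, ?_, ?_, ?_⟩ <;> simp only [FV, FVX0, FVWT, FVU1] <;> field_simp <;> ring

theorem PV_singular_points_general
    (e0 eI te1 : ℂ) (he0 : e0 ≠ 0) (heI : eI ≠ 0)
    (a0 aI : ℂ) (ha0 : a0 = e0 + e0⁻¹) (haI : aI = eI + eI⁻¹) :
    (te1 * e0 * eI = -1 →
      FV a0 te1 aI (-te1 - te1⁻¹) eI⁻¹ e0⁻¹ = 0 ∧
      FVX0 a0 te1 aI (-te1 - te1⁻¹) eI⁻¹ e0⁻¹ = 0 ∧
      FVWT a0 te1 aI (-te1 - te1⁻¹) eI⁻¹ e0⁻¹ = 0 ∧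
      FVU1 a0 te1 aI (-te1 - te1⁻¹) eI⁻¹ e0⁻¹ = 0) ∧
    (te1 = -(e0 * eI) →
      FV a0 te1 aI (-te1 - te1⁻¹) eI e0 = 0 ∧
      FVX0 a0 te1 aI (-te1 - te1⁻¹) eI e0 = 0 ∧
      FVWT a0 te1 aI (-te1 - te1⁻¹) eI e0 = 0 ∧
      FVU1 a0 te1 aI (-te1 - te1⁻¹) eI e0 = 0) := by
  subst ha0 haI
  refine ⟨fun h => ?_, isSingularPointFV_of_eq_neg_mul he0 heI⟩
  have hte1 : te1 = -(e0⁻¹ * eI⁻¹) := by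
    field_simp
    linear_combination h
  have hinv := isSingularPointFV_of_eq_neg_mul (inv_ne_zero he0) (inv_ne_zero heI) hte1
  rwa [inv_inv, inv_inv, add_comm e0⁻¹, add_comm eI⁻¹] at hinv

/-- **Singular points of the PV character variety coming from resonances:**
with `a_0 = e_0 + e_0⁻¹`, `a_∞ = e_∞ + e_∞⁻¹`:
(1) if `ẽ_1e_0e_∞ = −1`, then `(−ẽ_1 − ẽ_1⁻¹, e_∞⁻¹, e_0⁻¹)` is a singular point of
`{F̃(·;ã) = 0}`; (2) if `ẽ_1 = −e_0e_∞`, then `(−ẽ_1 − ẽ_1⁻¹, e_∞, e_0)` is a singular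
point of `{F̃(·;ã) = 0}`. -/
theorem PV_singular_points
    (e0 eI te1 : ℂ) (he0 : e0 ≠ 0) (heI : eI ≠ 0) (hte1 : te1 ≠ 0)
    (a0 aI : ℂ) (ha0 : a0 = e0 + e0⁻¹) (haI : aI = eI + eI⁻¹) :
    (te1 * e0 * eI = -1 →
      FV a0 te1 aI (-te1 - te1⁻¹) eI⁻¹ e0⁻¹ = 0 ∧
      FVX0 a0 te1 aI (-te1 - te1⁻¹) eI⁻¹ e0⁻¹ = 0 ∧
      FVWT a0 te1 aI (-te1 - te1⁻¹) eI⁻¹ e0⁻¹ = 0 ∧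
      FVU1 a0 te1 aI (-te1 - te1⁻¹) eI⁻¹ e0⁻¹ = 0) ∧
    (te1 = -(e0 * eI) →
      FV a0 te1 aI (-te1 - te1⁻¹) eI e0 = 0 ∧
      FVX0 a0 te1 aI (-te1 - te1⁻¹) eI e0 = 0 ∧
      FVWT a0 te1 aI (-te1 - te1⁻¹) eI e0 = 0 ∧
      FVU1 a0 te1 aI (-te1 - te1⁻¹) eI e0 = 0) :=
  PV_singular_points_general e0 eI te1 he0 heI a0 aI ha0 haI
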